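/- arXiv:1303.3607 — 2 statements merged into one kernel-verified Lean document; each statement's English description precedes it below -/
import Mathlib

section
/- For every integer n ≥ 2, the sum of double zeta values of even weight 2n satisfies ∑_{k=2}^{2n-1} ζ(k, 2n-k) = ζ(2n). -/
/-!
Parametrize the summation range `k₁ > k₂ > 0` by `k₂ = m`, `k₁ = m + d` with `m, d ≥ 1`. For fixed
`(m, d)` the summands of `ζ(k, s - k)`, `2 ≤ k < s`, are `(m / (m + d))^k / m^s`, a geometric
progression with sum `1 / (m^(s-2) d (m + d)) - 1 / ((m + d)^(s-1) d)`. Summed over `d`, the first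
term telescopes to `H_m / m^(s-1)`; summed over the antidiagonal `m + d = N`, the second gives
`H_(N-1) / N^(s-1)`. As `H_N - H_(N-1) = 1 / N`, the difference of the two series is `ζ(s)`.
Everything is nonnegative and dominated by the first term, which is summable once `s ≥ 4`.
-/

/-- The Riemann zeta value `ζ(s) = ∑_{k>0} k^{-s}` for a natural number exponent. -/
noncomputable def zetaVal (s : ℕ) : ℝ := ∑' k : ℕ+, (1 : ℝ) / (k : ℝ) ^ s

/-- The double zeta value `ζ(s₁, s₂) = ∑_{k₁ > k₂ > 0} k₁^{-s₁} k₂^{-s₂}`. -/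
noncomputable def doubleZeta (s₁ s₂ : ℕ) : ℝ :=
  ∑' p : {p : ℕ+ × ℕ+ // p.2 < p.1}, (1 : ℝ) / ((p.1.1 : ℝ) ^ s₁ * (p.1.2 : ℝ) ^ s₂)

open Finset Filter Topology

theorem hasSum_sub_add_of_antitone {f : ℕ → ℝ} (hf : Antitone f)
    (hf0 : Tendsto f atTop (𝓝 0)) (m : ℕ) :
    HasSum (fun d ↦ f d - f (d + m)) (∑ i ∈ range m, f i) := by
  rw [hasSum_iff_tendsto_nat_of_nonneg fun d ↦ sub_nonneg.2 (hf (Nat.le_add_right d m))]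
  have hpartial : ∀ N, ∑ d ∈ range N, (f d - f (d + m)) =
      ∑ i ∈ range m, f i - ∑ i ∈ range m, f (N + i) := by
    intro N
    have h₁ := sum_range_add f N m
    have h₂ := sum_range_add f m N
    rw [add_comm m N] at h₂
    simp only [sum_sub_distrib, add_comm _ m]
    linarith
  have htail : Tendsto (fun N ↦ ∑ i ∈ range m, f (N + i)) atTop (𝓝 0) := by
    simpa using tendsto_finsetSum (range m) fun i _ ↦ hf0.comp (tendsto_add_atTop_nat i)
  simpa [hpartial] using tendsto_const_nhds.sub htail

theorem hasSum_one_div_sub_one_div_add (m : ℕ) :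
    HasSum (fun d : ℕ ↦ 1 / (d + 1 : ℝ) - 1 / (d + m + 1)) (harmonic m) := by
  have hanti : Antitone fun d : ℕ ↦ 1 / (d + 1 : ℝ) := fun a b hab ↦ by
    dsimp only
    gcongr
  have h := hasSum_sub_add_of_antitone hanti tendsto_one_div_add_atTop_nhds_zero_nat m
  push_cast [harmonic, add_right_comm _ (m : ℝ)] at h ⊢
  simpa [one_div] using h

theorem harmonic_le_self (n : ℕ) : harmonic n ≤ n := by
  calc harmonic n ≤ ∑ _i ∈ range n, (1 : ℚ) :=
        sum_le_sum fun i _ ↦ inv_le_one_of_one_le₀ (by simp)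
    _ = n := by simp

theorem summable_harmonic_div_pow {p : ℕ} (hp : 3 ≤ p) :
    Summable fun n : ℕ ↦ (harmonic n : ℝ) / n ^ p := by
  refine (Real.summable_one_div_nat_pow.2 (by omega : 1 < p - 1)).of_nonneg_of_le
    (fun n ↦ div_nonneg (by unfold harmonic; push_cast; positivity) (by positivity)) fun n ↦ ?_
  rcases n.eq_zero_or_pos with rfl | hn
  · simp
  have hH : (harmonic n : ℝ) ≤ n := by exact_mod_cast harmonic_le_self n
  rw [div_le_div_iff₀ (by positivity) (by positivity), one_mul,
    ← Nat.sub_add_cancel (by omega : 1 ≤ p), pow_succ, Nat.add_sub_cancel, mul_comm]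
  gcongr

theorem sum_Ico_one_div_pow_mul_pow_add {a b : ℝ} (ha : 0 < a) (hb : 0 < b) {s : ℕ} (hs : 2 ≤ s) :
    ∑ k ∈ Ico 2 s, 1 / ((a + b) ^ k * a ^ (s - k)) + 1 / ((a + b) ^ (s - 1) * b) =
      1 / (a ^ (s - 2) * b * (a + b)) := by
  have hr : a / (a + b) ≠ 1 := by
    rw [Ne, div_eq_one_iff_eq (by positivity)]
    linarith
  have hgeom : ∑ k ∈ Ico 2 s, 1 / ((a + b) ^ k * a ^ (s - k)) =
      ∑ k ∈ Ico 2 s, (a / (a + b)) ^ k / a ^ s := by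
    refine sum_congr rfl fun k hk ↦ ?_
    rw [div_pow, pow_sub₀ a ha.ne' (mem_Ico.1 hk).2.le]
    field_simp
  rw [hgeom, ← sum_div, geom_sum_Ico hr hs]
  obtain ⟨t, rfl⟩ : ∃ t, s = t + 2 := ⟨s - 2, by omega⟩
  have hsub : a / (a + b) - 1 = -b / (a + b) := by field_simp; ring
  simp only [Nat.add_sub_cancel, show t + 2 - 1 = t + 1 by omega, hsub, div_pow]
  field_simp
  ring

namespace SumFormula

def natProdEquivPNatLt : ℕ × ℕ ≃ {p : ℕ+ × ℕ+ // p.2 < p.1} where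
  toFun x := ⟨(⟨x.1 + x.2 + 2, by omega⟩, ⟨x.1 + 1, by omega⟩), by
    rw [← PNat.coe_lt_coe]; dsimp; omega⟩
  invFun p := ((p.1.2 : ℕ) - 1, (p.1.1 : ℕ) - p.1.2 - 1)
  left_inv x := by ext <;> simp; omega
  right_inv p := by
    have h₁ := p.1.1.pos
    have h₂ := p.1.2.pos
    have h := PNat.coe_lt_coe _ _ |>.2 p.2
    refine Subtype.ext (Prod.ext (PNat.eq ?_) (PNat.eq ?_)) <;> simp <;> omega

-- `x = (i, j)` stands for `k₂ = m = i + 1`, `k₁ = m + d` with `d = j + 1`.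
noncomputable def doubleZetaTerm (s₁ s₂ : ℕ) (x : ℕ × ℕ) : ℝ :=
  1 / ((x.1 + x.2 + 2 : ℝ) ^ s₁ * (x.1 + 1 : ℝ) ^ s₂)

theorem doubleZeta_eq_tsum (s₁ s₂ : ℕ) : doubleZeta s₁ s₂ = ∑' x, doubleZetaTerm s₁ s₂ x := by
  rw [doubleZeta, ← natProdEquivPNatLt.tsum_eq]
  congr with x
  simp [natProdEquivPNatLt, doubleZetaTerm]

theorem doubleZetaTerm_nonneg (s₁ s₂ : ℕ) (x : ℕ × ℕ) : 0 ≤ doubleZetaTerm s₁ s₂ x := by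
  unfold doubleZetaTerm
  positivity

noncomputable def rowTerm (s : ℕ) (x : ℕ × ℕ) : ℝ :=
  1 / ((x.1 + 1 : ℝ) ^ (s - 2) * (x.2 + 1) * (x.1 + x.2 + 2))

noncomputable def diagonalTerm (s : ℕ) (x : ℕ × ℕ) : ℝ :=
  1 / ((x.1 + x.2 + 2 : ℝ) ^ (s - 1) * (x.2 + 1))

theorem diagonalTerm_nonneg (s : ℕ) (x : ℕ × ℕ) : 0 ≤ diagonalTerm s x := by
  unfold diagonalTerm
  positivity

theorem sum_doubleZetaTerm_add_diagonalTerm {s : ℕ} (hs : 2 ≤ s) (x : ℕ × ℕ) :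
    ∑ k ∈ Ico 2 s, doubleZetaTerm k (s - k) x + diagonalTerm s x = rowTerm s x := by
  have h := sum_Ico_one_div_pow_mul_pow_add (a := x.1 + 1) (b := x.2 + 1)
    (by positivity) (by positivity) hs
  rw [show (x.1 + 1 : ℝ) + (x.2 + 1) = x.1 + x.2 + 2 by ring] at h
  simpa [doubleZetaTerm, diagonalTerm, rowTerm, add_right_comm _ (x.2 : ℝ) 1] using h

theorem hasSum_rowTerm_fiber {s : ℕ} (hs : 2 ≤ s) (i : ℕ) :
    HasSum (fun j ↦ rowTerm s (i, j)) (harmonic (i + 1) / (i + 1 : ℝ) ^ (s - 1)) := by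
  have h := (hasSum_one_div_sub_one_div_add (i + 1)).mul_left (1 / (i + 1 : ℝ) ^ (s - 1))
  rw [one_div_mul_eq_div] at h
  refine h.congr_fun fun j ↦ ?_
  obtain ⟨t, rfl⟩ : ∃ t, s = t + 2 := ⟨s - 2, by omega⟩
  simp only [rowTerm, Nat.add_sub_cancel, show t + 2 - 1 = t + 1 by omega]
  push_cast
  field_simp
  ring

theorem summable_rowTerm {s : ℕ} (hs : 4 ≤ s) : Summable (rowTerm s) := by
  refine (summable_prod_of_nonneg fun x ↦ by unfold rowTerm; positivity).2
    ⟨fun i ↦ (hasSum_rowTerm_fiber (by omega) i).summable, ?_⟩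
  simp_rw [fun i ↦ (hasSum_rowTerm_fiber (s := s) (by omega) i).tsum_eq]
  simpa using (summable_nat_add_iff 1).2 (summable_harmonic_div_pow (p := s - 1) (by omega))

theorem hasSum_harmonic_div_of_hasSum_rowTerm {s : ℕ} (hs : 2 ≤ s) {a : ℝ}
    (h : HasSum (rowTerm s) a) :
    HasSum (fun n : ℕ ↦ (harmonic (n + 1) : ℝ) / (n + 1) ^ (s - 1)) a :=
  h.prod_fiberwise (hasSum_rowTerm_fiber hs)

theorem summable_diagonalTerm {s : ℕ} (hs : 4 ≤ s) : Summable (diagonalTerm s) :=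
  (summable_rowTerm hs).of_nonneg_of_le (diagonalTerm_nonneg s) fun x ↦ by
    rw [← sum_doubleZetaTerm_add_diagonalTerm (by omega) x]
    exact le_add_of_nonneg_left (sum_nonneg fun k _ ↦ doubleZetaTerm_nonneg _ _ x)

theorem summable_doubleZetaTerm {s k : ℕ} (hs : 4 ≤ s) (hk : k ∈ Ico 2 s) :
    Summable (doubleZetaTerm k (s - k)) :=
  (summable_rowTerm hs).of_nonneg_of_le (doubleZetaTerm_nonneg _ _) fun x ↦ by
    rw [← sum_doubleZetaTerm_add_diagonalTerm (by omega) x]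
    exact le_add_of_le_of_nonneg
      (single_le_sum (f := fun k ↦ doubleZetaTerm k (s - k) x)
        (fun k _ ↦ doubleZetaTerm_nonneg _ _ x) hk)
      (diagonalTerm_nonneg s x)

theorem sum_antidiagonal_diagonalTerm (s n : ℕ) :
    ∑ x ∈ antidiagonal n, diagonalTerm s x = harmonic (n + 1) / (n + 2 : ℝ) ^ (s - 1) := by
  rw [Nat.antidiagonal_eq_map', sum_map]
  push_cast [harmonic, sum_div]
  refine sum_congr rfl fun i hi ↦ ?_
  have hin : i ≤ n := Nat.lt_succ_iff.1 (mem_range.1 hi)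
  change 1 / (((n - i : ℕ) + i + 2 : ℝ) ^ (s - 1) * (i + 1)) = _
  rw [Nat.cast_sub hin, sub_add_cancel]
  field_simp

theorem hasSum_harmonic_div_of_hasSum_diagonalTerm {s : ℕ} {a : ℝ}
    (h : HasSum (diagonalTerm s) a) :
    HasSum (fun n : ℕ ↦ (harmonic n : ℝ) / (n + 1) ^ (s - 1)) a := by
  have hdiag := (HasAntidiagonal.sigmaAntidiagonalEquivProd.hasSum_iff.2 h).sigma fun n ↦
    hasSum_fintype _
  simp only [Function.comp_apply, HasAntidiagonal.sigmaAntidiagonalEquivProd_apply,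
    sum_coe_sort (antidiagonal _) (diagonalTerm s), sum_antidiagonal_diagonalTerm] at hdiag
  have h := (hasSum_nat_add_iff (f := fun n : ℕ ↦ (harmonic n : ℝ) / (n + 1) ^ (s - 1)) 1).1
    (by push_cast [add_assoc, one_add_one_eq_two]; exact hdiag)
  simpa using h

theorem zetaVal_eq_sub {s : ℕ} (hs : 1 ≤ s) {a b : ℝ}
    (ha : HasSum (fun n : ℕ ↦ (harmonic (n + 1) : ℝ) / (n + 1) ^ (s - 1)) a)
    (hb : HasSum (fun n : ℕ ↦ (harmonic n : ℝ) / (n + 1) ^ (s - 1)) b) :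
    zetaVal s = a - b := by
  rw [zetaVal, tsum_pnat_eq_tsum_succ (f := fun n ↦ 1 / (n : ℝ) ^ s)]
  refine ((ha.sub hb).congr_fun fun n ↦ ?_).tsum_eq
  obtain ⟨t, rfl⟩ : ∃ t, s = t + 1 := ⟨s - 1, by omega⟩
  push_cast [harmonic_succ, Nat.add_sub_cancel]
  field_simp
  ring

end SumFormula

open SumFormula in
theorem sum_Ico_doubleZeta_eq_zetaVal {s : ℕ} (hs : 4 ≤ s) :
    ∑ k ∈ Ico 2 s, doubleZeta k (s - k) = zetaVal s := by
  have hrow := summable_rowTerm hs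
  have hdiag := summable_diagonalTerm hs
  calc ∑ k ∈ Ico 2 s, doubleZeta k (s - k)
      = ∑' x, (rowTerm s x - diagonalTerm s x) := by
        simp_rw [doubleZeta_eq_tsum,
          ← Summable.tsum_finsetSum fun k ↦ summable_doubleZetaTerm hs,
          ← sum_doubleZetaTerm_add_diagonalTerm (s := s) (by omega), add_sub_cancel_right]
    _ = ∑' x, rowTerm s x - ∑' x, diagonalTerm s x := hrow.tsum_sub hdiag
    _ = zetaVal s :=
        (zetaVal_eq_sub (by omega) (hasSum_harmonic_div_of_hasSum_rowTerm (by omega) hrow.hasSum)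
          (hasSum_harmonic_div_of_hasSum_diagonalTerm hdiag.hasSum)).symm

theorem euler_sum (n : ℕ) (hn : 2 ≤ n) :
    ∑ k ∈ Finset.Icc 2 (2 * n - 1), doubleZeta k (2 * n - k) = zetaVal (2 * n) := by
  rw [← Ico_add_one_right_eq_Icc, Nat.sub_add_cancel (by omega)]
  exact sum_Ico_doubleZeta_eq_zetaVal (by omega)
end

section
/- For every integer n ≥ 2, the sum of double zeta values with both arguments even and of total weight 2n satisfies ∑_{k=1}^{n-1} ζ(2k, 2n-2k) = (3/4) ζ(2n). -/
/-!
For `a > b` the terms `a^{-2k} b^{-(2n-2k)}`, `1 ≤ k ≤ n - 1`, form a geometric progression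
whose sum is `K(a, b) + K(b, a)` with `K(a, b) = b^{-(2n-2)} / (a² - b²)`. So the left side is the
sum of `K` over all pairs `a ≠ b`, which converges absolutely once `n ≥ 2`. Summing over `a`
first, the partial fractions `1 / (a² - b²) = (1 / 2b) (1 / (a - b) - 1 / (a + b))` telescope
(with step `2b`) to `∑_{a ≠ b} 1 / (a² - b²) = 3 / (4b²)`, which leaves `(3 / 4) ∑_b b^{-2n}`.
-/

open Finset Filter Topology

theorem sum_Icc_one_div_pow_mul_pow_succ {K : Type*} [Field K] {x y : K} (hx : x ≠ 0) (hy : y ≠ 0)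
    (hxy : x ≠ y) (m : ℕ) :
    ∑ k ∈ Icc 1 m, 1 / (x ^ k * y ^ (m + 1 - k))
      = 1 / (y ^ m * (x - y)) + 1 / (x ^ m * (y - x)) := by
  induction m with
  | zero =>
    rw [Icc_eq_empty (by norm_num), sum_empty, pow_zero, pow_zero, one_mul, one_mul, ← neg_sub x y,
      one_div_neg_eq_neg_one_div, add_neg_cancel]
  | succ m ih =>
    have hterm : ∀ k ∈ Icc 1 m, 1 / (x ^ k * y ^ (m + 1 + 1 - k))
        = 1 / y * (1 / (x ^ k * y ^ (m + 1 - k))) := by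
      intro k hk
      rw [show m + 1 + 1 - k = m + 1 - k + 1 by grind, pow_succ]
      field_simp
    rw [sum_Icc_succ_top (by omega), sum_congr rfl hterm, ← mul_sum, ih,
      show m + 1 + 1 - (m + 1) = 1 by omega]
    field_simp
    ring

theorem hasSum_sub_nat_add {G : Type*} [AddCommGroup G] [TopologicalSpace G]
    [IsTopologicalAddGroup G] [T2Space G] {f : ℕ → G} (k : ℕ) (hf : Tendsto f atTop (𝓝 0))
    (hs : Summable fun n ↦ f n - f (n + k)) :
    HasSum (fun n ↦ f n - f (n + k)) (∑ i ∈ range k, f i) := by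
  rw [hs.hasSum_iff_tendsto_nat]
  have hpartial : ∀ N, ∑ i ∈ range N, (f i - f (i + k))
      = ∑ i ∈ range k, f i - ∑ i ∈ range k, f (N + i) := by
    intro N
    rw [sum_sub_distrib, sub_eq_sub_iff_add_eq_add, ← sum_range_add, add_comm N k, sum_range_add]
    simp only [add_comm k]
  have htail : Tendsto (fun N ↦ ∑ i ∈ range k, f (N + i)) atTop (𝓝 0) := by
    simpa using tendsto_finsetSum (range k) fun i _ ↦ hf.comp (tendsto_add_atTop_nat i)
  simpa [hpartial] using (tendsto_const_nhds (x := ∑ i ∈ range k, f i)).sub htail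

-- The terms are antisymmetric under `i ↦ 2c - i`; the middle one is `1 / 0 = 0`.
theorem sum_range_one_div_sub_eq_zero (c : ℕ) : ∑ i ∈ range (2 * c + 1), 1 / ((i : ℝ) - c) = 0 := by
  have hanti : ∀ i ∈ range (2 * c + 1),
      1 / (((2 * c + 1 - 1 - i : ℕ) : ℝ) - c) = -(1 / ((i : ℝ) - c)) := by
    intro i hi
    rw [Nat.cast_sub (by rw [mem_range] at hi; omega), ← one_div_neg_eq_neg_one_div]
    push_cast
    ring_nf
  have h := sum_range_reflect (fun i : ℕ ↦ 1 / ((i : ℝ) - c)) (2 * c + 1)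
  rw [sum_congr rfl hanti, sum_neg_distrib] at h
  linarith

-- Partial fractions for `a = i + 1`, `b = c + 1`. At `i = c` both `1 / 0` are `0`, and the
-- indicator term makes up for the second fraction.
theorem one_div_succ_sq_sub_sq_eq (c i : ℕ) :
    1 / (((i : ℝ) + 1) ^ 2 - ((c : ℝ) + 1) ^ 2)
      = (1 / ((i : ℝ) - c) - 1 / (((i + (2 * c + 2) : ℕ) : ℝ) - c)) / (2 * ((c : ℝ) + 1))
        + if i = c then 1 / (4 * ((c : ℝ) + 1) ^ 2) else 0 := by
  push_cast
  rw [show (i : ℝ) + (2 * c + 2) - c = i + c + 2 by ring]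
  split_ifs with h
  · subst h
    rw [sub_self, sub_self, div_zero, zero_sub]
    field_simp
    ring
  · have h1 : (i : ℝ) - c ≠ 0 := sub_ne_zero.2 (by exact_mod_cast h)
    have h3 : ((i : ℝ) + 1) ^ 2 - ((c : ℝ) + 1) ^ 2 ≠ 0 := by
      rw [show ((i : ℝ) + 1) ^ 2 - ((c : ℝ) + 1) ^ 2 = ((i : ℝ) - c) * ((i : ℝ) + c + 2) by ring]
      positivity
    field_simp
    ring

theorem summable_one_div_succ_sq_sub_sq (c : ℕ) :
    Summable fun i : ℕ ↦ 1 / (((i : ℝ) + 1) ^ 2 - ((c : ℝ) + 1) ^ 2) := by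
  rw [← summable_nat_add_iff (c + 1)]
  refine ((summable_nat_add_iff 1).2 (Real.summable_one_div_nat_pow.2 one_lt_two)).of_nonneg_of_le
    (fun i ↦ ?_) (fun i ↦ ?_)
  all_goals
    push_cast
    rw [show ((i : ℝ) + (c + 1) + 1) ^ 2 - ((c : ℝ) + 1) ^ 2 = (i + 1) * (i + 1 + 2 * (c + 1)) by
      ring]
  · positivity
  · gcongr
    nlinarith

theorem hasSum_one_div_succ_sq_sub_sq (c : ℕ) :
    HasSum (fun i : ℕ ↦ 1 / (((i : ℝ) + 1) ^ 2 - ((c : ℝ) + 1) ^ 2))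
      (3 / (4 * ((c : ℝ) + 1) ^ 2)) := by
  set φ : ℕ → ℝ := fun i ↦ 1 / ((i : ℝ) - c)
  have hφ : Tendsto φ atTop (𝓝 0) := by
    simpa [φ, Function.comp_def, sub_eq_add_neg] using tendsto_inv_atTop_zero.comp
      (tendsto_atTop_add_const_right _ (-(c : ℝ)) tendsto_natCast_atTop_atTop)
  have hdiag : HasSum (fun i : ℕ ↦ if i = c then 1 / (4 * ((c : ℝ) + 1) ^ 2) else 0)
      (1 / (4 * ((c : ℝ) + 1) ^ 2)) := hasSum_ite_eq c _
  have hdiff : Summable fun i ↦ φ i - φ (i + (2 * c + 2)) := by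
    refine (((summable_one_div_succ_sq_sub_sq c).sub hdiag.summable).mul_left
      (2 * ((c : ℝ) + 1))).congr fun i ↦ ?_
    rw [one_div_succ_sq_sub_sq_eq c i]
    field_simp
    ring
  have hφsum : ∑ i ∈ range (2 * c + 2), φ i = 1 / ((c : ℝ) + 1) := by
    rw [sum_range_succ, sum_range_one_div_sub_eq_zero]
    rw [zero_add]
    push_cast [φ]
    ring
  have h := ((hasSum_sub_nat_add _ hφ hdiff).div_const (2 * ((c : ℝ) + 1))).add hdiag
  have hval : 1 / ((c : ℝ) + 1) / (2 * ((c : ℝ) + 1)) + 1 / (4 * ((c : ℝ) + 1) ^ 2)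
      = 3 / (4 * ((c : ℝ) + 1) ^ 2) := by
    field_simp
    ring
  rw [hφsum, hval] at h
  exact h.congr_fun (one_div_succ_sq_sub_sq_eq c)

theorem hasSum_one_div_sq_sub_sq (b : ℕ+) :
    HasSum (fun a : ℕ+ ↦ 1 / ((a : ℝ) ^ 2 - (b : ℝ) ^ 2)) (3 / (4 * (b : ℝ) ^ 2)) := by
  obtain ⟨c, rfl⟩ : ∃ c : ℕ, c.succPNat = b := ⟨b.natPred, b.succPNat_natPred⟩
  rw [show ((c.succPNat : ℕ) : ℝ) = c + 1 by simp]
  refine (hasSum_pnat_iff_hasSum_succ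
    (f := fun a : ℕ ↦ 1 / ((a : ℝ) ^ 2 - ((c : ℝ) + 1) ^ 2))).2 ?_
  simpa using hasSum_one_div_succ_sq_sub_sq c

theorem hasSum_zetaVal {s : ℕ} (hs : 1 < s) : HasSum (fun k : ℕ+ ↦ 1 / (k : ℝ) ^ s) (zetaVal s) :=
  ((Real.summable_one_div_nat_pow.2 hs).comp_injective PNat.coe_injective).hasSum

theorem HasSum.subtype_lt_add_swap {α G : Type*} [LinearOrder α] [AddCommGroup G] [UniformSpace G]
    [IsUniformAddGroup G] [CompleteSpace G] [T2Space G] {f : α × α → G} {s : G} (hf : HasSum f s)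
    (hdiag : ∀ a, f (a, a) = 0) :
    HasSum (fun p : {p : α × α // p.2 < p.1} ↦ f p + f p.1.swap) s := by
  set T := {p : α × α | p.2 < p.1}
  have hT := (hf.summable.subtype (· ∈ T)).hasSum
  have hTc := (hf.summable.subtype (· ∈ Tᶜ)).hasSum
  let swapT : T → ↥Tᶜ := fun p ↦ ⟨p.1.swap, not_lt.2 p.2.le⟩
  have hswap : Function.Injective swapT := fun p q h ↦
    Subtype.ext (Prod.swap_injective (congrArg Subtype.val h))
  have hvanish : ∀ q ∉ Set.range swapT, (f ∘ Subtype.val) q = 0 := by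
    rintro ⟨⟨a, b⟩, hq⟩ hrange
    obtain rfl : a = b := by
      by_contra hab
      exact hrange ⟨⟨(b, a), lt_of_le_of_ne (not_lt.1 hq) hab⟩, rfl⟩
    exact hdiag a
  rw [← (hT.add_compl hTc).unique hf]
  rw [← hswap.hasSum_iff hvanish] at hTc
  exact hT.add hTc

theorem sum_tsum_eq_of_hasSum_sum {ι α : Type*} {s : Finset ι} {f : ι → α → ℝ} {a : ℝ}
    (hf : ∀ i ∈ s, ∀ x, 0 ≤ f i x) (h : HasSum (fun x ↦ ∑ i ∈ s, f i x) a) :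
    ∑ i ∈ s, ∑' x, f i x = a := by
  have hsum : ∀ i ∈ s, Summable (f i) := fun i hi ↦
    h.summable.of_nonneg_of_le (hf i hi) fun x ↦ single_le_sum (fun j hj ↦ hf j hj x) hi
  rw [← Summable.tsum_finsetSum hsum, h.tsum_eq]

-- `1 / 0 = 0` makes the kernel vanish on the diagonal.
noncomputable def evenKernel (m : ℕ) (p : ℕ+ × ℕ+) : ℝ :=
  1 / (((p.2 : ℝ) ^ 2) ^ m * ((p.1 : ℝ) ^ 2 - (p.2 : ℝ) ^ 2))

theorem evenKernel_add_swap (m : ℕ) {p : ℕ+ × ℕ+} (hp : p.1 ≠ p.2) :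
    evenKernel m p + evenKernel m p.swap
      = ∑ k ∈ Icc 1 m, 1 / ((p.1 : ℝ) ^ (2 * k) * (p.2 : ℝ) ^ (2 * (m + 1) - 2 * k)) := by
  have hsq : ((p.1 : ℝ)) ^ 2 ≠ (p.2 : ℝ) ^ 2 := by
    rw [Ne, sq_eq_sq₀ (by positivity) (by positivity)]
    exact_mod_cast hp
  rw [evenKernel, evenKernel, Prod.fst_swap, Prod.snd_swap,
    ← sum_Icc_one_div_pow_mul_pow_succ (by positivity) (by positivity) hsq]
  refine sum_congr rfl fun k _ ↦ ?_
  rw [← Nat.mul_sub, pow_mul, pow_mul]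

theorem norm_evenKernel_le {m : ℕ} (hm : m ≠ 0) (a b : ℕ+) :
    ‖evenKernel m (a, b)‖ ≤ 1 / ((a : ℝ) - b) ^ 2 * (1 / (b : ℝ) ^ 2) := by
  rcases eq_or_ne (a : ℝ) b with hab | hab
  · simp [evenKernel, hab]
  have hb : (b : ℝ) ^ 2 ≤ |((b : ℝ) ^ 2) ^ m| := by
    rw [abs_of_nonneg (by positivity)]
    exact le_self_pow₀ (one_le_pow₀ (by exact_mod_cast b.pos)) hm
  have hsub : |(a : ℝ) - b| ≤ |(a : ℝ) + b| := by
    have ha : (0 : ℝ) < a := by positivity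
    have hb : (0 : ℝ) < b := by positivity
    rw [abs_of_pos (by positivity : (0 : ℝ) < a + b), abs_sub_le_iff]
    constructor <;> linarith
  have hab' : ((a : ℝ) - b) ^ 2 ≤ |(a : ℝ) ^ 2 - (b : ℝ) ^ 2| := by
    rw [sq_sub_sq, abs_mul, ← sq_abs, sq]
    exact mul_le_mul_of_nonneg_right hsub (abs_nonneg _)
  have hab0 : (0 : ℝ) < ((a : ℝ) - b) ^ 2 := by have := sub_ne_zero.2 hab; positivity
  calc ‖evenKernel m (a, b)‖ = 1 / (|((b : ℝ) ^ 2) ^ m| * |(a : ℝ) ^ 2 - (b : ℝ) ^ 2|) := by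
        simp [evenKernel]
    _ ≤ 1 / (((a : ℝ) - b) ^ 2 * (b : ℝ) ^ 2) :=
        one_div_le_one_div_of_le (by positivity)
          (by rw [mul_comm]; exact mul_le_mul hb hab' hab0.le (abs_nonneg _))
    _ = 1 / ((a : ℝ) - b) ^ 2 * (1 / (b : ℝ) ^ 2) := by rw [one_div_mul_one_div]

theorem summable_evenKernel {m : ℕ} (hm : m ≠ 0) : Summable (evenKernel m) := by
  have hmaj : Summable fun p : ℤ × ℕ+ ↦ 1 / (p.1 : ℝ) ^ 2 * (1 / (p.2 : ℝ) ^ 2) :=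
    (Real.summable_one_div_int_pow.2 one_lt_two).mul_of_nonneg (hasSum_zetaVal one_lt_two).summable
      (fun _ ↦ by positivity) (fun _ ↦ by positivity)
  have hinj : Function.Injective fun p : ℕ+ × ℕ+ ↦ ((p.1 : ℤ) - p.2, p.2) := by
    rintro ⟨a, b⟩ ⟨a', b'⟩ h
    obtain ⟨h, rfl⟩ := Prod.mk.inj h
    simp only [sub_left_inj, Nat.cast_inj, PNat.coe_inj] at h
    rw [h]
  refine (hmaj.comp_injective hinj).of_norm_bounded fun ⟨a, b⟩ ↦ ?_
  simpa only [Function.comp_apply, Int.cast_sub, Int.cast_natCast] using norm_evenKernel_le hm a b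

theorem hasSum_evenKernel {m : ℕ} (hm : m ≠ 0) :
    HasSum (evenKernel m) (3 / 4 * zetaVal (2 * (m + 1))) := by
  have hfiber (b : ℕ+) : HasSum (fun a ↦ evenKernel m (a, b))
      (1 / ((b : ℝ) ^ 2) ^ m * (3 / (4 * (b : ℝ) ^ 2))) := by
    simpa only [evenKernel, ← one_div_mul_one_div] using
      (hasSum_one_div_sq_sub_sq b).mul_left (1 / ((b : ℝ) ^ 2) ^ m)
  have hζ : HasSum (fun b : ℕ+ ↦ 1 / ((b : ℝ) ^ 2) ^ m * (3 / (4 * (b : ℝ) ^ 2)))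
      (3 / 4 * zetaVal (2 * (m + 1))) :=
    ((hasSum_zetaVal (by omega)).mul_left (3 / 4)).congr_fun fun b ↦ by
      rw [pow_mul]
      field_simp
      ring
  have hsum := (summable_evenKernel hm).hasSum
  have hfib := ((Equiv.prodComm _ _).hasSum_iff.2 hsum).prod_fiberwise hfiber
  rwa [hfib.unique hζ] at hsum

theorem even_double_zeta_sum (n : ℕ) (hn : 2 ≤ n) :
    ∑ k ∈ Finset.Icc 1 (n - 1), doubleZeta (2 * k) (2 * n - 2 * k)
      = (3 / 4) * zetaVal (2 * n) := by
  obtain ⟨m, rfl⟩ : ∃ m, n = m + 1 := ⟨n - 1, by omega⟩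
  have h := (hasSum_evenKernel (by omega : m ≠ 0)).subtype_lt_add_swap fun a ↦ by simp [evenKernel]
  rw [Nat.add_sub_cancel]
  exact sum_tsum_eq_of_hasSum_sum (fun k _ p ↦ by positivity)
    (h.congr_fun fun p ↦ (evenKernel_add_swap m p.2.ne').symm)
end
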